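/- Fix 0≤q<1. The map (x,y) ↦ (φ₊(x,y), φ₋(x,y)) is a bijection from {(x,y)∈ℝ² : x>0, y≥0} onto {(u,w)∈ℝ² : u≥0, −1<w≤0}. Consequently, (α,β,γ,δ) ↦ (a,b,c,d) = (φ₊(α,γ), φ₊(β,δ), φ₋(α,γ), φ₋(β,δ)) is a bijection from {α,β>0, γ,δ≥0} onto {a,b≥0, −1<c,d≤0}. -/

import Mathlib

/-- `φ₊(x,y) = (1/(2x))(1-q-x+y + √((1-q-x+y)² + 4xy))`. -/
noncomputable def phiPlus (q x y : ℝ) : ℝ :=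
  (1 / (2 * x)) * (1 - q - x + y + Real.sqrt ((1 - q - x + y) ^ 2 + 4 * x * y))

/-- `φ₋(x,y) = (1/(2x))(1-q-x+y - √((1-q-x+y)² + 4xy))`. -/
noncomputable def phiMinus (q x y : ℝ) : ℝ :=
  (1 / (2 * x)) * (1 - q - x + y - Real.sqrt ((1 - q - x + y) ^ 2 + 4 * x * y))

/-!
`φ₊(x,y)` and `φ₋(x,y)` are the two roots of `x t² - (1-q-x+y) t - y = 0`, so by Vieta
`φ₊ φ₋ = -y/x` and `(1 + φ₊)(1 + φ₋) = (1-q)/x`. For `x > 0, y ≥ 0` the first identity puts the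
roots on either side of `0` and the second, with `1 + φ₊ ≥ 1`, gives `φ₋ > -1`. The same identities
invert the map: `x = (1-q)/((1+u)(1+w))` and `y = -x u w`. The four-variable statement is the
two-variable one applied to `(α, γ)` and `(β, δ)` separately.
-/

open Set

theorem Set.BijOn.prodMap_transpose {α β γ δ : Type*} {f : α × β → γ × δ} {s : Set (α × β)}
    {t : Set (γ × δ)} (h : BijOn f s t) :
    BijOn (fun r : (α × α) × (β × β) =>
        (((f (r.1.1, r.2.1)).1, (f (r.1.2, r.2.2)).1), ((f (r.1.1, r.2.1)).2, (f (r.1.2, r.2.2)).2)))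
      {r | (r.1.1, r.2.1) ∈ s ∧ (r.1.2, r.2.2) ∈ s}
      {r | (r.1.1, r.2.1) ∈ t ∧ (r.1.2, r.2.2) ∈ t} := by
  have h₁ := (Equiv.prodProdProdComm α α β β).bijective.bijOn_preimage (t := s ×ˢ s)
  have h₂ := (Equiv.prodProdProdComm γ δ γ δ).bijOn_image (s := t ×ˢ t)
  rw [Equiv.image_eq_preimage_symm] at h₂
  exact h₂.comp ((h.prodMap h).comp h₁)

noncomputable def phiMap (q : ℝ) (p : ℝ × ℝ) : ℝ × ℝ :=
  (phiPlus q p.1 p.2, phiMinus q p.1 p.2)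

noncomputable def phiInv (q : ℝ) (w : ℝ × ℝ) : ℝ × ℝ :=
  let x := (1 - q) / ((1 + w.1) * (1 + w.2))
  (x, -(x * w.1 * w.2))

section Vieta

variable {q x y : ℝ}

lemma phiPlus_add_phiMinus :
    phiPlus q x y + phiMinus q x y = (1 - q - x + y) / x := by
  rw [phiPlus, phiMinus]
  ring

lemma phiPlus_mul_phiMinus (hD : 0 ≤ (1 - q - x + y) ^ 2 + 4 * x * y) :
    phiPlus q x y * phiMinus q x y = -y / x := by
  rcases eq_or_ne x 0 with rfl | hx
  · simp [phiPlus]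
  calc phiPlus q x y * phiMinus q x y
      = (1 / (2 * x)) ^ 2 * ((1 - q - x + y) ^ 2
          - Real.sqrt ((1 - q - x + y) ^ 2 + 4 * x * y) ^ 2) := by
        rw [phiPlus, phiMinus]; ring
    _ = -y / x := by
        rw [Real.sq_sqrt hD]
        field_simp
        ring

lemma one_add_phiPlus_mul_one_add_phiMinus (hx : x ≠ 0)
    (hD : 0 ≤ (1 - q - x + y) ^ 2 + 4 * x * y) :
    (1 + phiPlus q x y) * (1 + phiMinus q x y) = (1 - q) / x := by
  calc (1 + phiPlus q x y) * (1 + phiMinus q x y)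
      = 1 + (phiPlus q x y + phiMinus q x y) + phiPlus q x y * phiMinus q x y := by ring
    _ = (1 - q) / x := by
        rw [phiPlus_add_phiMinus, phiPlus_mul_phiMinus hD]
        field_simp
        ring

lemma phiMinus_le_phiPlus (hx : 0 < x) : phiMinus q x y ≤ phiPlus q x y := by
  rw [phiPlus, phiMinus]
  have := Real.sqrt_nonneg ((1 - q - x + y) ^ 2 + 4 * x * y)
  exact mul_le_mul_of_nonneg_left (by linarith) (by positivity)

lemma phiPlus_eq_and_phiMinus_eq {u w : ℝ} (hx : 0 < x) (hwu : w ≤ u)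
    (hsum : 1 - q - x + y = x * (u + w)) (hprod : y = -(x * u * w)) :
    phiPlus q x y = u ∧ phiMinus q x y = w := by
  have hsqrt : Real.sqrt ((1 - q - x + y) ^ 2 + 4 * x * y) = x * (u - w) := by
    rw [hsum, hprod, show (x * (u + w)) ^ 2 + 4 * x * -(x * u * w) = (x * (u - w)) ^ 2 by ring]
    exact Real.sqrt_sq (mul_nonneg hx.le (by linarith))
  rw [phiPlus, phiMinus, hsqrt, hsum]
  constructor <;> field_simp <;> ring

end Vieta

section Bijection

variable {q : ℝ}

lemma phiMap_mem (hq : q < 1) {x y : ℝ} (hx : 0 < x) (hy : 0 ≤ y) :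
    0 ≤ phiPlus q x y ∧ -1 < phiMinus q x y ∧ phiMinus q x y ≤ 0 := by
  have hD : 0 ≤ (1 - q - x + y) ^ 2 + 4 * x * y := by positivity
  have hprod : phiPlus q x y * phiMinus q x y ≤ 0 := by
    rw [phiPlus_mul_phiMinus hD, neg_div]
    exact neg_nonpos.mpr (by positivity)
  have hone : 0 < (1 + phiPlus q x y) * (1 + phiMinus q x y) := by
    rw [one_add_phiPlus_mul_one_add_phiMinus hx.ne' hD]
    exact div_pos (by linarith) hx
  have hle := phiMinus_le_phiPlus (q := q) (y := y) hx
  refine ⟨?_, ?_, ?_⟩ <;> nlinarith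

lemma phiInv_phiMap (hq : q < 1) {p : ℝ × ℝ} (hx : 0 < p.1) (hy : 0 ≤ p.2) :
    phiInv q (phiMap q p) = p := by
  obtain ⟨x, y⟩ := p
  have hD : 0 ≤ (1 - q - x + y) ^ 2 + 4 * x * y := by positivity
  have hfst : (1 - q) / ((1 + phiPlus q x y) * (1 + phiMinus q x y)) = x := by
    rw [one_add_phiPlus_mul_one_add_phiMinus hx.ne' hD, div_div_cancel₀ (by linarith)]
  simp only [phiInv, phiMap, hfst, mul_assoc, phiPlus_mul_phiMinus hD]
  ext
  · rfl
  · field_simp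

lemma phiInv_mem (hq : q < 1) {w : ℝ × ℝ} (hu : 0 ≤ w.1) (hw₁ : -1 < w.2) (hw₀ : w.2 ≤ 0) :
    0 < (phiInv q w).1 ∧ 0 ≤ (phiInv q w).2 := by
  have hx : 0 < (1 - q) / ((1 + w.1) * (1 + w.2)) :=
    div_pos (by linarith) (mul_pos (by linarith) (by linarith))
  refine ⟨hx, ?_⟩
  simp only [phiInv]
  nlinarith [mul_nonneg hx.le hu]

lemma phiMap_phiInv (hq : q < 1) {u w : ℝ} (hu : 0 ≤ u) (hw₁ : -1 < w) (hw₀ : w ≤ 0) :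
    phiMap q (phiInv q (u, w)) = (u, w) := by
  obtain ⟨hx, -⟩ := phiInv_mem (w := (u, w)) hq hu hw₁ hw₀
  have hw' : 1 + w ≠ 0 := by linarith
  obtain ⟨hplus, hminus⟩ := phiPlus_eq_and_phiMinus_eq (q := q) (u := u) (w := w) hx
    (by linarith) (by simp only [phiInv]; field_simp; ring) rfl
  exact Prod.ext hplus hminus

theorem phiMap_bijOn (hq : q < 1) :
    BijOn (phiMap q) {p | 0 < p.1 ∧ 0 ≤ p.2} {w | 0 ≤ w.1 ∧ -1 < w.2 ∧ w.2 ≤ 0} :=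
  InvOn.bijOn (f' := phiInv q)
    ⟨fun _ hp ↦ phiInv_phiMap hq hp.1 hp.2, fun _ hw ↦ phiMap_phiInv hq hw.1 hw.2.1 hw.2.2⟩
    (fun _ hp ↦ phiMap_mem hq hp.1 hp.2) (fun _ hw ↦ phiInv_mem hq hw.1 hw.2.1 hw.2.2)

end Bijection

theorem stmt2 (q : ℝ) (hq1 : q < 1) :
    Set.BijOn (fun p : ℝ × ℝ => (phiPlus q p.1 p.2, phiMinus q p.1 p.2))
      {p : ℝ × ℝ | 0 < p.1 ∧ 0 ≤ p.2}
      {w : ℝ × ℝ | 0 ≤ w.1 ∧ -1 < w.2 ∧ w.2 ≤ 0} ∧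
    Set.BijOn
      (fun r : (ℝ × ℝ) × (ℝ × ℝ) =>
        ((phiPlus q r.1.1 r.2.1, phiPlus q r.1.2 r.2.2),
         (phiMinus q r.1.1 r.2.1, phiMinus q r.1.2 r.2.2)))
      {r : (ℝ × ℝ) × (ℝ × ℝ) | 0 < r.1.1 ∧ 0 < r.1.2 ∧ 0 ≤ r.2.1 ∧ 0 ≤ r.2.2}
      {s : (ℝ × ℝ) × (ℝ × ℝ) | 0 ≤ s.1.1 ∧ 0 ≤ s.1.2 ∧
        (-1 < s.2.1 ∧ s.2.1 ≤ 0) ∧ (-1 < s.2.2 ∧ s.2.2 ≤ 0)} := by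
  refine ⟨phiMap_bijOn hq1, ?_⟩
  convert (phiMap_bijOn hq1).prodMap_transpose using 1 <;> ext <;> simp only [mem_ofPred_eq] <;> tauto
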